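/- arXiv:1410.3921 — 7 statements merged into one kernel-verified Lean document; each statement's English description precedes it below -/
import Mathlib

section
/- Let X be a proper metric space. Then the space SX of geodesics of X, with distance d(v,w) = sup_{t∈ℝ} e^{−|t|}·d(v(t), w(t)), is a proper metric space, and the footpoint projection π : SX → X, π(v) = v(0), is 1-Lipschitz and proper (preimages of compact sets are compact). -/
/-- The space of (unit-speed, bi-infinite) geodesics of `X`: isometric embeddings `ℝ → X`. -/
def GeodSpace (X : Type*) [MetricSpace X] : Type _ := {v : ℝ → X // Isometry v}

/-!
Geodesics are 1-Lipschitz, so on `SX` pointwise convergence is the same as locally uniform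
convergence (Ascoli); and since `d(v t, w t) ≤ d(v 0, w 0) + 2|t|`, the weight `e^{-|t|}` makes the
contribution of large `|t|` uniformly small, so locally uniform convergence is convergence in `SX`.
Hence `SX` carries the topology of pointwise convergence, in which it is the closed set of
isometries. A closed ball of radius `r` around `v₀` is exactly the set of geodesics with
`v t ∈ closedBall (v₀ t) (e^{|t|} r)` for all `t`, which is compact by Tychonoff.
-/

open Filter Topology Set Real

namespace GeodSpace

variable {X : Type*} [MetricSpace X]

lemma dist_apply_le (v w : GeodSpace X) (t : ℝ) :
    dist (v.1 t) (w.1 t) ≤ dist (v.1 0) (w.1 0) + 2 * |t| := by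
  have hv : dist (v.1 t) (v.1 0) = |t| := by rw [v.2.dist_eq, Real.dist_eq, sub_zero]
  have hw : dist (w.1 0) (w.1 t) = |t| := by rw [w.2.dist_eq, Real.dist_eq, zero_sub, abs_neg]
  linarith [dist_triangle4 (v.1 t) (v.1 0) (w.1 0) (w.1 t)]

lemma exp_neg_abs_mul_dist_apply_le (v w : GeodSpace X) (t : ℝ) :
    exp (-|t|) * dist (v.1 t) (w.1 t) ≤ dist (v.1 0) (w.1 0) + 2 := by
  have h_exp : exp (-|t|) ≤ 1 := exp_le_one_iff.2 (neg_nonpos.2 (abs_nonneg t))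
  have h_abs : |t| * exp (-|t|) ≤ 1 := by
    rw [exp_neg, mul_inv_le_iff₀ (exp_pos _), one_mul]
    linarith [add_one_le_exp |t|]
  calc exp (-|t|) * dist (v.1 t) (w.1 t)
      ≤ exp (-|t|) * (dist (v.1 0) (w.1 0) + 2 * |t|) := by
        gcongr; exact dist_apply_le v w t
    _ = exp (-|t|) * dist (v.1 0) (w.1 0) + 2 * (|t| * exp (-|t|)) := by ring
    _ ≤ 1 * dist (v.1 0) (w.1 0) + 2 * 1 := by gcongr
    _ = dist (v.1 0) (w.1 0) + 2 := by ring

lemma bddAbove_range_exp_neg_abs_mul_dist (v w : GeodSpace X) :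
    BddAbove (range fun t ↦ exp (-|t|) * dist (v.1 t) (w.1 t)) :=
  ⟨_, forall_mem_range.2 (exp_neg_abs_mul_dist_apply_le v w)⟩

noncomputable instance : MetricSpace (GeodSpace X) where
  dist v w := ⨆ t : ℝ, exp (-|t|) * dist (v.1 t) (w.1 t)
  dist_self v := by simp
  dist_comm v w := by simp only [dist_comm]
  dist_triangle u v w := ciSup_le fun t ↦ by
    grw [dist_triangle (u.1 t) (v.1 t) (w.1 t), mul_add]
    exact add_le_add (le_ciSup (bddAbove_range_exp_neg_abs_mul_dist u v) t)
      (le_ciSup (bddAbove_range_exp_neg_abs_mul_dist v w) t)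
  eq_of_dist_eq_zero {v w} h := Subtype.ext <| funext fun t ↦ by
    have := le_ciSup (bddAbove_range_exp_neg_abs_mul_dist v w) t
    rw [h] at this
    exact dist_le_zero.1 <| nonpos_of_mul_nonpos_right this (exp_pos _)

lemma dist_eq (v w : GeodSpace X) :
    dist v w = ⨆ t : ℝ, exp (-|t|) * dist (v.1 t) (w.1 t) := rfl

lemma dist_le_iff {v w : GeodSpace X} {r : ℝ} :
    dist v w ≤ r ↔ ∀ t, exp (-|t|) * dist (v.1 t) (w.1 t) ≤ r :=
  ciSup_le_iff (bddAbove_range_exp_neg_abs_mul_dist v w)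

lemma dist_apply_le_exp_mul_dist (v w : GeodSpace X) (t : ℝ) :
    dist (v.1 t) (w.1 t) ≤ exp |t| * dist v w := by
  rw [← inv_mul_le_iff₀ (exp_pos _), ← exp_neg]
  exact dist_le_iff.1 le_rfl t

lemma dist_le_dist_apply_zero_add_two (v w : GeodSpace X) :
    dist v w ≤ dist (v.1 0) (w.1 0) + 2 :=
  dist_le_iff.2 (exp_neg_abs_mul_dist_apply_le v w)

lemma lipschitzWith_apply_zero : LipschitzWith 1 (fun v : GeodSpace X ↦ v.1 0) :=
  LipschitzWith.of_dist_le_mul fun v w ↦ by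
    simpa using dist_apply_le_exp_mul_dist v w 0

lemma continuous_val : Continuous (fun v : GeodSpace X ↦ v.1) :=
  continuous_pi fun t ↦
    (LipschitzWith.of_dist_le' fun v w ↦ dist_apply_le_exp_mul_dist v w t).continuous

lemma tendsto_of_tendstoUniformlyOn_Icc {ι : Type*} {l : Filter ι} {u : ι → GeodSpace X}
    {v : GeodSpace X} (h : ∀ T, TendstoUniformlyOn (fun i ↦ (u i).1) v.1 l (Icc (-T) T)) :
    Tendsto u l (𝓝 v) := by
  rw [Metric.tendsto_nhds]
  intro ε hε
  have h_tail : Tendsto (fun x ↦ exp (-x) * (1 + 2 * x)) atTop (𝓝 0) := by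
    have := (tendsto_pow_mul_exp_neg_atTop_nhds_zero 0).add
      ((tendsto_pow_mul_exp_neg_atTop_nhds_zero 1).const_mul 2)
    rw [mul_zero, add_zero] at this
    exact this.congr fun x ↦ by ring
  obtain ⟨T, hT⟩ := eventually_atTop.1 (h_tail.eventually (gt_mem_nhds (half_pos hε)))
  have h_unif := Metric.tendstoUniformlyOn_iff.1 (h (max T 0)) (min (ε / 2) 1) (by positivity)
  filter_upwards [h_unif] with i hi
  refine (dist_le_iff.2 fun t ↦ ?_).trans_lt (half_lt_self hε)
  rcases le_or_gt |t| (max T 0) with ht | ht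
  · have h_near := hi t (abs_le.1 ht)
    rw [dist_comm] at h_near
    calc exp (-|t|) * dist ((u i).1 t) (v.1 t) ≤ 1 * dist ((u i).1 t) (v.1 t) := by
          gcongr; exact exp_le_one_iff.2 (neg_nonpos.2 (abs_nonneg t))
      _ ≤ ε / 2 := by linarith [min_le_left (ε / 2) 1]
  · have h_zero := hi 0 (by simp)
    rw [dist_comm] at h_zero
    calc exp (-|t|) * dist ((u i).1 t) (v.1 t)
        ≤ exp (-|t|) * (1 + 2 * |t|) := by
          gcongr
          linarith [dist_apply_le (u i) v t, min_le_right (ε / 2) 1]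
      _ ≤ ε / 2 := (hT |t| (le_max_left T 0 |>.trans ht.le)).le

lemma tendsto_nhds_iff_tendsto_val {ι : Type*} {l : Filter ι} {u : ι → GeodSpace X}
    {v : GeodSpace X} : Tendsto u l (𝓝 v) ↔ Tendsto (fun i ↦ (u i).1) l (𝓝 v.1) := by
  refine ⟨fun h ↦ (continuous_val.tendsto v).comp h, fun h ↦ ?_⟩
  have h_covers : ⋃₀ {K : Set ℝ | IsCompact K} = univ :=
    sUnion_eq_univ_iff.2 fun t ↦ ⟨{t}, isCompact_singleton, rfl⟩
  -- Ascoli: for an equicontinuous family, pointwise convergence is locally uniform.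
  have h_equicont : ∀ K ∈ {K : Set ℝ | IsCompact K}, EquicontinuousOn (fun i ↦ (u i).1) K :=
    fun K _ ↦ (LipschitzWith.uniformEquicontinuous _ 1 fun i ↦ (u i).2.lipschitz)
      |>.equicontinuous.equicontinuousOn K
  have h_unif := (EquicontinuousOn.tendsto_uniformOnFun_iff_pi (fun K hK ↦ hK) h_covers
    h_equicont l v.1).2 h
  exact tendsto_of_tendstoUniformlyOn_Icc fun T ↦
    UniformOnFun.tendsto_iff_tendstoUniformlyOn.1 h_unif _ isCompact_Icc

lemma isInducing_val : IsInducing (fun v : GeodSpace X ↦ v.1) :=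
  isInducing_iff_nhds.2 fun v ↦ le_antisymm (continuous_val.tendsto v).le_comap
    (tendsto_id'.1 (tendsto_nhds_iff_tendsto_val.2 tendsto_comap))

lemma isClosed_range_val : IsClosed (range fun v : GeodSpace X ↦ v.1) := by
  have : range (fun v : GeodSpace X ↦ v.1) = ⋂ s, ⋂ t, {f | dist (f s) (f t) = dist s t} := by
    ext f
    simp only [mem_range, mem_iInter, mem_ofPred_eq]
    exact ⟨fun ⟨v, hv⟩ ↦ hv ▸ v.2.dist_eq, fun hf ↦ ⟨⟨f, Isometry.of_dist_eq hf⟩, rfl⟩⟩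
  rw [this]
  exact isClosed_iInter fun s ↦ isClosed_iInter fun t ↦ isClosed_eq (by fun_prop) continuous_const

lemma closedBall_eq_preimage_pi (v₀ : GeodSpace X) (r : ℝ) :
    Metric.closedBall v₀ r =
      (fun v : GeodSpace X ↦ v.1) ⁻¹' univ.pi fun t ↦ Metric.closedBall (v₀.1 t) (exp |t| * r) := by
  ext v
  simp only [Metric.mem_closedBall, dist_le_iff, mem_preimage, mem_univ_pi]
  exact forall_congr' fun t ↦ by rw [exp_neg, inv_mul_le_iff₀ (exp_pos _)]

instance [ProperSpace X] : ProperSpace (GeodSpace X) where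
  isCompact_closedBall v₀ r := by
    rw [closedBall_eq_preimage_pi]
    exact isInducing_val.isCompact_preimage isClosed_range_val
      (isCompact_univ_pi fun t ↦ isCompact_closedBall _ _)

lemma isCompact_preimage_apply_zero [ProperSpace X] {K : Set X} (hK : IsCompact K) :
    IsCompact ((fun v : GeodSpace X ↦ v.1 0) ⁻¹' K) := by
  obtain ⟨C, hC⟩ := Metric.isBounded_iff.1 hK.isBounded
  refine Metric.isCompact_of_isClosed_isBounded
    (hK.isClosed.preimage lipschitzWith_apply_zero.continuous)
    (Metric.isBounded_iff.2 ⟨C + 2, fun v hv w hw ↦ ?_⟩)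
  linarith [dist_le_dist_apply_zero_add_two v w, hC hv hw]

end GeodSpace

theorem stmt7 {X : Type*} [MetricSpace X] [ProperSpace X] :
    ∃ m : MetricSpace (GeodSpace X),
      (∀ v w : GeodSpace X,
        @dist _ m.toPseudoMetricSpace.toDist v w
          = ⨆ t : ℝ, Real.exp (-|t|) * dist (v.1 t) (w.1 t)) ∧
      @ProperSpace (GeodSpace X) m.toPseudoMetricSpace ∧
      @LipschitzWith (GeodSpace X) X m.toPseudoMetricSpace.toPseudoEMetricSpace _ 1
        (fun v : GeodSpace X => v.1 0) ∧
      (∀ K : Set X, IsCompact K →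
        @IsCompact (GeodSpace X) m.toUniformSpace.toTopologicalSpace
          ((fun v : GeodSpace X => v.1 0) ⁻¹' K)) :=
  ⟨inferInstance, GeodSpace.dist_eq, inferInstance, GeodSpace.lipschitzWith_apply_zero,
    fun _ ↦ GeodSpace.isCompact_preimage_apply_zero⟩
end

section
/- Let (U, 𝒜, μ₁) and (V, ℬ, μ₂) be σ-finite measure spaces with μ₁(U) > 0 and μ₂(V) > 0, let S be a set, ψ : U × V → S a function, and Ω ⊆ U × V a measurable set whose complement has measure zero for the product measure μ₁ ⊗ μ₂. Suppose that ψ(a,b) = ψ(a,d) = ψ(c,d) whenever all three pairs (a,b), (a,d), (c,d) lie in Ω. Then there is a measurable set Ω' ⊆ U × V of full μ₁ ⊗ μ₂-measure on which ψ is constant. -/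
open MeasureTheory

theorem stmt10 {U V S : Type*} [MeasurableSpace U] [MeasurableSpace V]
    (μ₁ : Measure U) (μ₂ : Measure V) [SigmaFinite μ₁] [SigmaFinite μ₂]
    (h₁ : 0 < μ₁ Set.univ) (h₂ : 0 < μ₂ Set.univ)
    (ψ : U × V → S) (Ω : Set (U × V)) (hΩm : MeasurableSet Ω)
    (hΩfull : (μ₁.prod μ₂) Ωᶜ = 0)
    (hψ : ∀ (a c : U) (b d : V), (a, b) ∈ Ω → (a, d) ∈ Ω → (c, d) ∈ Ω →
      ψ (a, b) = ψ (a, d) ∧ ψ (a, d) = ψ (c, d)) :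
    ∃ Ω' : Set (U × V), MeasurableSet Ω' ∧ (μ₁.prod μ₂) Ω'ᶜ = 0 ∧
      ∃ s : S, ∀ z ∈ Ω', ψ z = s := by
  have h := (Measure.measure_prod_null (μ := μ₁) (ν := μ₂) hΩm.compl).mp hΩfull
  have hμne : μ₁ ≠ 0 := by
    intro h0; rw [h0] at h₁; simp at h₁
  have : (MeasureTheory.ae μ₁).NeBot := ae_neBot.mpr hμne
  obtain ⟨a₀, ha₀⟩ := h.exists
  have ha₀ : μ₂ (Prod.mk a₀ ⁻¹' Ωᶜ) = 0 := ha₀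
  have hpre : Prod.mk a₀ ⁻¹' Ωᶜ = (Prod.mk a₀ ⁻¹' Ω)ᶜ := rfl
  have hb : (Prod.mk a₀ ⁻¹' Ω).Nonempty := by
    by_contra hempty
    rw [Set.not_nonempty_iff_eq_empty] at hempty
    rw [hpre, hempty, Set.compl_empty] at ha₀
    exact absurd ha₀ h₂.ne'
  obtain ⟨b₀, hb₀⟩ := hb
  have hslm : MeasurableSet (Prod.mk a₀ ⁻¹' Ω) := measurable_prodMk_left hΩm
  refine ⟨Ω ∩ (Set.univ ×ˢ (Prod.mk a₀ ⁻¹' Ω)), hΩm.inter (MeasurableSet.univ.prod hslm),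
    ?_, ψ (a₀, b₀), ?_⟩
  · rw [Set.compl_inter]
    apply measure_union_null hΩfull
    have : ((Set.univ : Set U) ×ˢ (Prod.mk a₀ ⁻¹' Ω))ᶜ = (Set.univ : Set U) ×ˢ (Prod.mk a₀ ⁻¹' Ω)ᶜ := by
      ext ⟨x, y⟩; simp [Set.mem_prod]
    rw [this, Measure.prod_prod, ← hpre, ha₀, mul_zero]
  · rintro ⟨c, d⟩ ⟨hcd, -, hd⟩
    obtain ⟨e1, e2⟩ := hψ a₀ c b₀ d hb₀ hd hcd
    exact (e1.trans e2).symm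
end

section
/- Let G be a countable group acting by measurable maps on a measurable space (Z, 𝔐), let ν be a G-invariant measure on Z, and let E and F be two fundamental domains for the action. Define ν_E(A) = ∑_{B∈𝔉₁} (1/|B|)·ν(A ∩ Z_B^E) and ν_F(A) = ∑_{B∈𝔉₁} (1/|B|)·ν(A ∩ Z_B^F). Then ν_E(A) = ν_F(A) for every G-invariant measurable set A ⊆ Z. -/
open MeasureTheory
open scoped ENNReal

/-- `Z_B^A = {z ∈ Z : for all g ∈ G, g • z ∈ A ↔ g ∈ B}`. -/
def fdCell {G Z : Type*} [SMul G Z] (A : Set Z) (B : Finset G) : Set Z :=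
  {z | ∀ g : G, g • z ∈ A ↔ g ∈ B}

section Aux
variable {G Z : Type*} [Group G] [Countable G] [MulAction G Z] [MeasurableSpace Z]

/-- right translate of a finset -/
noncomputable def rtr {G : Type*} [Group G] (B : Finset G) (h : G) : Finset G :=
  @Finset.image _ _ (Classical.decEq G) (· * h) B

lemma mem_rtr {G : Type*} [Group G] {B : Finset G} {h g : G} :
    g ∈ rtr B h ↔ g * h⁻¹ ∈ B := by
  classical
  unfold rtr
  rw [Finset.image_congr (g := (· * h)) (fun _ _ => rfl)]
  constructor
  · intro hg
    rcases Finset.mem_image.1 (by convert hg) with ⟨b, hb, rfl⟩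
    simpa using hb
  · intro hb
    have : g = g * h⁻¹ * h := by simp
    rw [this]
    exact by convert Finset.mem_image_of_mem _ hb

lemma rtr_rtr {G : Type*} [Group G] (B : Finset G) (a b : G) :
    rtr (rtr B a) b = rtr B (a * b) := by
  ext g; simp [mem_rtr, mul_assoc]

lemma rtr_one {G : Type*} [Group G] (B : Finset G) : rtr B 1 = B := by
  ext g; simp [mem_rtr]

lemma card_rtr {G : Type*} [Group G] (B : Finset G) (h : G) :
    (rtr B h).card = B.card := by
  classical
  unfold rtr
  convert Finset.card_image_of_injective B (mul_left_injective h)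

lemma mem_fdCell {A : Set Z} {B : Finset G} {z : Z} :
    z ∈ fdCell A B ↔ ∀ g : G, g • z ∈ A ↔ g ∈ B := Iff.rfl

lemma fdCell_measurable (hmeas : ∀ g : G, Measurable fun z : Z => g • z)
    {A : Set Z} (hA : MeasurableSet A) (B : Finset G) : MeasurableSet (fdCell A B) := by
  have h : fdCell A B = ⋂ g : G, {z : Z | g • z ∈ A ↔ g ∈ B} := by
    ext z; simp [fdCell, Set.mem_iInter]
  rw [h]
  refine MeasurableSet.iInter fun g => ?_
  by_cases hg : g ∈ B
  · have : {z : Z | g • z ∈ A ↔ g ∈ B} = (fun z : Z => g • z) ⁻¹' A := by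
      ext z; simp [hg]
    rw [this]; exact hmeas g hA
  · have : {z : Z | g • z ∈ A ↔ g ∈ B} = ((fun z : Z => g • z) ⁻¹' A)ᶜ := by
      ext z; simp [hg]
    rw [this]; exact (hmeas g hA).compl

lemma fdCell_preimage (A : Set Z) (B : Finset G) (h : G) :
    (fun z : Z => h • z) ⁻¹' fdCell A B = fdCell A (rtr B h) := by
  ext z
  simp only [Set.mem_preimage, mem_fdCell]
  constructor
  · intro hz g
    have := hz (g * h⁻¹)
    rw [smul_smul] at this
    simp only [inv_mul_cancel_right] at this
    rw [mem_rtr]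
    exact this
  · intro hz g
    have := hz (g * h)
    rw [mem_rtr] at this
    simp only [mul_inv_cancel_right] at this
    rw [smul_smul]
    exact this

lemma fdCell_disjoint (A : Set Z) :
    Pairwise fun B C : Finset G => Disjoint (fdCell A B) (fdCell A C) := by
  intro B C hBC
  rw [Set.disjoint_left]
  intro z hzB hzC
  exact hBC (Finset.ext fun g => by rw [← hzB g, ← hzC g])

lemma orbit_subset_iUnion_fdCell (F : Set Z)
    (hFfin : ∀ z ∈ F, {g : G | g • z ∈ F}.Finite) :
    (⋃ g : G, (fun z : Z => g • z) '' F) ⊆ ⋃ C : Finset G, fdCell F C := by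
  intro z hz
  rcases Set.mem_iUnion.1 hz with ⟨g, f, hf, rfl⟩
  have hfin : {k : G | k • ((fun z : Z => g • z) f) ∈ F}.Finite := by
    have h1 : {k : G | k • ((fun z : Z => g • z) f) ∈ F} = (fun k => k * g) ⁻¹' {m : G | m • f ∈ F} := by
      ext k
      simp [Set.mem_preimage, mul_smul]
    rw [h1]
    exact (hFfin f hf).preimage ((mul_left_injective g).injOn)
  refine Set.mem_iUnion.2 ⟨hfin.toFinset, fun k => ?_⟩
  simp [Set.Finite.mem_toFinset]

lemma fdCell_empty_subset (F : Set Z) :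
    fdCell F (∅ : Finset G) ⊆ (⋃ g : G, (fun z : Z => g • z) '' F)ᶜ := by
  intro z hz
  simp only [Set.mem_compl_iff, Set.mem_iUnion, not_exists]
  rintro g ⟨f, hf, rfl⟩
  have := (hz g⁻¹).1
  simp only [Finset.notMem_empty, iff_false] at this
  exact this (by simpa [smul_smul] using hf)

lemma measure_decomp (hmeas : ∀ g : G, Measurable fun z : Z => g • z)
    (ν : Measure Z) {F : Set Z} (hFm : MeasurableSet F)
    (hFfull : ν ((⋃ g : G, (fun z : Z => g • z) '' F)ᶜ) = 0)
    (hFfin : ∀ z ∈ F, {g : G | g • z ∈ F}.Finite)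
    {X : Set Z} (hX : MeasurableSet X) :
    ν X = ∑' C : Finset G, ν (X ∩ fdCell F C) := by
  set U := ⋃ C : Finset G, fdCell F C with hU
  have hUnull : ν Uᶜ = 0 :=
    measure_mono_null (Set.compl_subset_compl.2 (orbit_subset_iUnion_fdCell F hFfin)) hFfull
  have h3 : ν (X ∩ U) = ∑' C : Finset G, ν (X ∩ fdCell F C) := by
    rw [hU, Set.inter_iUnion]
    exact measure_iUnion
      (fun B C hBC => (fdCell_disjoint F hBC).mono Set.inter_subset_right Set.inter_subset_right)
      (fun C => hX.inter (fdCell_measurable hmeas hFm C))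
  refine le_antisymm ?_ ?_
  · calc ν X = ν ((X ∩ U) ∪ (X \ U)) := by rw [Set.inter_union_diff]
    _ ≤ ν (X ∩ U) + ν (X \ U) := measure_union_le _ _
    _ = ν (X ∩ U) := by
        rw [measure_mono_null (Set.diff_subset_compl X U) hUnull, add_zero]
    _ = _ := h3
  · rw [← h3]; exact measure_mono Set.inter_subset_left

end Aux

theorem stmt13 {G Z : Type*} [Group G] [Countable G] [MulAction G Z] [MeasurableSpace Z]
    (hmeas : ∀ g : G, Measurable fun z : Z => g • z)
    (ν : Measure Z)
    (hinv : ∀ (g : G) (A : Set Z), MeasurableSet A → ν ((fun z : Z => g • z) ⁻¹' A) = ν A)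
    (E F : Set Z) (hEm : MeasurableSet E) (hFm : MeasurableSet F)
    (hEfull : ν ((⋃ g : G, (fun z : Z => g • z) '' E)ᶜ) = 0)
    (hFfull : ν ((⋃ g : G, (fun z : Z => g • z) '' F)ᶜ) = 0)
    (hEfin : ∀ z ∈ E, {g : G | g • z ∈ E}.Finite)
    (hFfin : ∀ z ∈ F, {g : G | g • z ∈ F}.Finite)
    (A : Set Z) (hA : MeasurableSet A)
    (hAinv : ∀ g : G, (fun z : Z => g • z) '' A = A) :
    ∑' B : {B : Finset G // (1 : G) ∈ B}, ((B.1.card : ℝ≥0∞))⁻¹ * ν (A ∩ fdCell E B.1)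
      = ∑' B : {B : Finset G // (1 : G) ∈ B}, ((B.1.card : ℝ≥0∞))⁻¹ * ν (A ∩ fdCell F B.1) := by
  classical
  have hApre : ∀ h : G, (fun z : Z => h • z) ⁻¹' A = A := by
    intro h
    ext z
    simp only [Set.mem_preimage]
    conv_lhs => rw [← hAinv h]
    exact (MulAction.injective h).mem_set_image
  have htrans : ∀ (B C : Finset G) (h : G),
      ν (A ∩ fdCell E (rtr B h) ∩ fdCell F (rtr C h)) = ν (A ∩ fdCell E B ∩ fdCell F C) := by
    intro B C h
    have hm : MeasurableSet (A ∩ fdCell E B ∩ fdCell F C) :=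
      (hA.inter (fdCell_measurable hmeas hEm B)).inter (fdCell_measurable hmeas hFm C)
    have h2 := hinv h _ hm
    rw [Set.preimage_inter, Set.preimage_inter, hApre h, fdCell_preimage, fdCell_preimage] at h2
    exact h2
  have hE0 : ν (fdCell E (∅ : Finset G)) = 0 :=
    measure_mono_null (fdCell_empty_subset E) hEfull
  have hF0 : ν (fdCell F (∅ : Finset G)) = 0 :=
    measure_mono_null (fdCell_empty_subset F) hFfull
  -- the self-equivalence of triples
  let e : (Finset G × Finset G × G) ≃ (Finset G × Finset G × G) :=
    { toFun := fun t => (rtr t.1 t.2.2⁻¹, rtr t.2.1 t.2.2⁻¹, t.2.2⁻¹)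
      invFun := fun t => (rtr t.1 t.2.2⁻¹, rtr t.2.1 t.2.2⁻¹, t.2.2⁻¹)
      left_inv := fun t => by simp [Prod.ext_iff, rtr_rtr, rtr_one]
      right_inv := fun t => by simp [Prod.ext_iff, rtr_rtr, rtr_one] }
  -- the two triple-indexed summands
  set Φ : Finset G × Finset G × G → ℝ≥0∞ := fun t =>
    if (1 : G) ∈ t.1 ∧ t.2.2 ∈ t.2.1 then
      (t.1.card : ℝ≥0∞)⁻¹ * (t.2.1.card : ℝ≥0∞)⁻¹ *
        ν (A ∩ fdCell E (rtr t.1 t.2.2⁻¹) ∩ fdCell F (rtr t.2.1 t.2.2⁻¹))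
    else 0 with hΦdef
  set Ψ : Finset G × Finset G × G → ℝ≥0∞ := fun t =>
    if t.2.2 ∈ t.1 ∧ (1 : G) ∈ t.2.1 then
      (t.1.card : ℝ≥0∞)⁻¹ * (t.2.1.card : ℝ≥0∞)⁻¹ *
        ν (A ∩ fdCell E t.1 ∩ fdCell F t.2.1)
    else 0 with hΨdef
  have hΦΨ : ∀ t, Φ t = Ψ (e t) := by
    rintro ⟨B, C, h⟩
    have he : e (B, C, h) = (rtr B h⁻¹, rtr C h⁻¹, h⁻¹) := rfl
    rw [he]
    have hc1 : (h⁻¹ ∈ rtr B h⁻¹ ∧ (1 : G) ∈ rtr C h⁻¹) ↔ ((1 : G) ∈ B ∧ h ∈ C) := by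
      rw [mem_rtr, mem_rtr]; simp
    simp only [hΦdef, hΨdef]
    by_cases hc : (1 : G) ∈ B ∧ h ∈ C
    · rw [if_pos hc, if_pos (hc1.2 hc), card_rtr, card_rtr]
    · rw [if_neg hc, if_neg (fun hx => hc (hc1.1 hx))]
  calc
    ∑' B : {B : Finset G // (1 : G) ∈ B}, ((B.1.card : ℝ≥0∞))⁻¹ * ν (A ∩ fdCell E B.1)
        = ∑' B : Finset G, (if (1 : G) ∈ B then (B.card : ℝ≥0∞)⁻¹ * ν (A ∩ fdCell E B) else 0) := by
          have hsub := tsum_subtype {B : Finset G | (1 : G) ∈ B}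
            (fun B => (B.card : ℝ≥0∞)⁻¹ * ν (A ∩ fdCell E B))
          refine Eq.trans ?_ (hsub.trans (tsum_congr fun B => ?_))
          · rfl
          · by_cases h1 : (1 : G) ∈ B
            · rw [Set.indicator_of_mem (show B ∈ {B : Finset G | (1 : G) ∈ B} from h1), if_pos h1]
            · rw [Set.indicator_of_notMem (show B ∉ {B : Finset G | (1 : G) ∈ B} from h1), if_neg h1]
    _ = ∑' B : Finset G, ∑' C : Finset G,
          (if (1 : G) ∈ B then (B.card : ℝ≥0∞)⁻¹ * ν (A ∩ fdCell E B ∩ fdCell F C) else 0) := by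
          refine tsum_congr fun B => ?_
          by_cases h1 : (1 : G) ∈ B
          · simp only [if_pos h1]
            rw [measure_decomp hmeas ν hFm hFfull hFfin
              (hA.inter (fdCell_measurable hmeas hEm B)), ← ENNReal.tsum_mul_left]
          · simp only [if_neg h1, tsum_zero]
    _ = ∑' B : Finset G, ∑' C : Finset G, ∑' h : G, Φ (B, C, h) := by
          refine tsum_congr fun B => tsum_congr fun C => ?_
          by_cases h1 : (1 : G) ∈ B
          · have hΦ' : ∀ h : G, Φ (B, C, h) =
                if h ∈ C then (B.card : ℝ≥0∞)⁻¹ * (C.card : ℝ≥0∞)⁻¹ *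
                  ν (A ∩ fdCell E B ∩ fdCell F C) else 0 := by
              intro h
              simp only [hΦdef]
              by_cases hc : h ∈ C
              · rw [if_pos ⟨h1, hc⟩, if_pos hc, htrans]
              · rw [if_neg (fun hx => hc hx.2), if_neg hc]
            rw [if_pos h1, tsum_congr hΦ', tsum_eq_sum (s := C) (fun h hh => if_neg hh),
              Finset.sum_congr rfl (fun h hh => if_pos hh)]
            simp only [Finset.sum_const, nsmul_eq_mul]
            rcases C.eq_empty_or_nonempty with rfl | hCne
            · have h0 : ν (A ∩ fdCell E B ∩ fdCell F ∅) = 0 :=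
                measure_mono_null Set.inter_subset_right hF0
              simp [h0]
            · have hc0 : (C.card : ℝ≥0∞) ≠ 0 := by
                simp [Finset.card_eq_zero, hCne.ne_empty]
              have hcT : (C.card : ℝ≥0∞) ≠ ⊤ := ENNReal.natCast_ne_top _
              rw [show (C.card : ℝ≥0∞) * ((B.card : ℝ≥0∞)⁻¹ * (C.card : ℝ≥0∞)⁻¹ *
                    ν (A ∩ fdCell E B ∩ fdCell F C)) =
                  ((C.card : ℝ≥0∞) * (C.card : ℝ≥0∞)⁻¹) *
                    ((B.card : ℝ≥0∞)⁻¹ * ν (A ∩ fdCell E B ∩ fdCell F C)) from by ring,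
                ENNReal.mul_inv_cancel hc0 hcT, one_mul]
          · rw [if_neg h1]
            refine ((tsum_congr fun h => ?_).trans tsum_zero).symm
            exact if_neg (fun hx => h1 hx.1)
    _ = ∑' t : Finset G × Finset G × G, Φ t := by
          rw [ENNReal.tsum_prod']
          exact tsum_congr fun B =>
            (ENNReal.tsum_prod' (f := fun p : Finset G × G => Φ (B, p.1, p.2))).symm
    _ = ∑' t : Finset G × Finset G × G, Ψ t := by
          rw [tsum_congr hΦΨ]
          exact e.tsum_eq Ψ
    _ = ∑' B : Finset G, ∑' C : Finset G, ∑' k : G, Ψ (B, C, k) := by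
          rw [ENNReal.tsum_prod']
          exact tsum_congr fun B =>
            ENNReal.tsum_prod' (f := fun p : Finset G × G => Ψ (B, p.1, p.2))
    _ = ∑' B : Finset G, ∑' C : Finset G,
          (if (1 : G) ∈ C then (C.card : ℝ≥0∞)⁻¹ * ν (A ∩ fdCell E B ∩ fdCell F C) else 0) := by
          refine tsum_congr fun B => tsum_congr fun C => ?_
          by_cases h1 : (1 : G) ∈ C
          · have hΨ' : ∀ k : G, Ψ (B, C, k) =
                if k ∈ B then (B.card : ℝ≥0∞)⁻¹ * (C.card : ℝ≥0∞)⁻¹ *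
                  ν (A ∩ fdCell E B ∩ fdCell F C) else 0 := by
              intro k
              simp only [hΨdef]
              by_cases hk : k ∈ B
              · rw [if_pos ⟨hk, h1⟩, if_pos hk]
              · rw [if_neg (fun hx => hk hx.1), if_neg hk]
            rw [tsum_congr hΨ', tsum_eq_sum (s := B) (fun k hk => if_neg hk),
              Finset.sum_congr rfl (fun k hk => if_pos hk), if_pos h1]
            simp only [Finset.sum_const, nsmul_eq_mul]
            rcases B.eq_empty_or_nonempty with rfl | hBne
            · have h0 : ν (A ∩ fdCell E ∅ ∩ fdCell F C) = 0 :=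
                measure_mono_null (Set.inter_subset_left.trans Set.inter_subset_right) hE0
              simp [h0]
            · have hb0 : (B.card : ℝ≥0∞) ≠ 0 := by
                simp [Finset.card_eq_zero, hBne.ne_empty]
              have hbT : (B.card : ℝ≥0∞) ≠ ⊤ := ENNReal.natCast_ne_top _
              rw [show (B.card : ℝ≥0∞) * ((B.card : ℝ≥0∞)⁻¹ * (C.card : ℝ≥0∞)⁻¹ *
                    ν (A ∩ fdCell E B ∩ fdCell F C)) =
                  ((B.card : ℝ≥0∞) * (B.card : ℝ≥0∞)⁻¹) *
                    ((C.card : ℝ≥0∞)⁻¹ * ν (A ∩ fdCell E B ∩ fdCell F C)) from by ring,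
                ENNReal.mul_inv_cancel hb0 hbT, one_mul]
          · rw [if_neg h1]
            refine ((tsum_congr fun k => ?_).trans tsum_zero)
            exact if_neg (fun hx => h1 hx.2)
    _ = ∑' C : Finset G, ∑' B : Finset G,
          (if (1 : G) ∈ C then (C.card : ℝ≥0∞)⁻¹ * ν (A ∩ fdCell E B ∩ fdCell F C) else 0) :=
          ENNReal.tsum_comm
    _ = ∑' C : Finset G, (if (1 : G) ∈ C then (C.card : ℝ≥0∞)⁻¹ * ν (A ∩ fdCell F C) else 0) := by
          refine tsum_congr fun C => ?_
          by_cases h1 : (1 : G) ∈ C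
          · simp only [if_pos h1]
            rw [ENNReal.tsum_mul_left, measure_decomp hmeas ν hEm hEfull hEfin
              (hA.inter (fdCell_measurable hmeas hFm C))]
            congr 1
            exact tsum_congr fun B => by rw [Set.inter_right_comm]
          · simp only [if_neg h1, tsum_zero]
    _ = ∑' B : {B : Finset G // (1 : G) ∈ B}, ((B.1.card : ℝ≥0∞))⁻¹ * ν (A ∩ fdCell F B.1) := by
          have hsub := tsum_subtype {C : Finset G | (1 : G) ∈ C}
            (fun C => (C.card : ℝ≥0∞)⁻¹ * ν (A ∩ fdCell F C))
          refine (Eq.trans ?_ (hsub.trans (tsum_congr fun C => ?_))).symm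
          · rfl
          · by_cases h1 : (1 : G) ∈ C
            · rw [Set.indicator_of_mem (show C ∈ {C : Finset G | (1 : G) ∈ C} from h1), if_pos h1]
            · rw [Set.indicator_of_notMem (show C ∉ {C : Finset G | (1 : G) ∈ C} from h1), if_neg h1]
end

section
/- Let G be a countable group acting by measurable maps on a measurable space (Z, 𝔐), let ν be a G-invariant measure on Z, and suppose the action admits a fundamental domain. Then there is a unique measure ν_G on the quotient space (Z/G, 𝔐/G) such that: for every measurable A ⊆ Z and every G-invariant measurable h : Z → [0,∞], the induced functions h̄, f̄_A : Z/G → [0,∞] (defined by h̄∘pr = h and f̄_A∘pr = f_A, where f_A(z) = #{g ∈ G : gz ∈ A}) satisfy ∫_A h dν = ∫_{Z/G} h̄·f̄_A dν_G. Moreover, for any ν-preserving measurable map φ : Z → Z with φ∘g = g∘φ for all g ∈ G, the factor map φ_G : Z/G → Z/G defined by φ_G∘pr = pr∘φ preserves ν_G. -/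
open MeasureTheory
open scoped ENNReal

/-- The defining property of the quotient measure `ν_G` on `Z/G` (with the quotient
σ-algebra `𝔐/G`): for every measurable `A ⊆ Z` and every `G`-invariant measurable
`h : Z → [0,∞]`, with `h̄, f̄_A` the functions induced on `Z/G` by `h` and by
`f_A(z) = #{g : g • z ∈ A}`, one has `∫_A h dν = ∫_{Z/G} h̄ · f̄_A dν_G`. -/
def IsQuotientMeasure {G Z : Type*} [Group G] [MulAction G Z] [mZ : MeasurableSpace Z]
    (ν : Measure Z)
    (νG : @Measure (Quotient (MulAction.orbitRel G Z))
      (MeasurableSpace.map (Quotient.mk (MulAction.orbitRel G Z)) mZ)) : Prop :=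
  ∀ A : Set Z, MeasurableSet A →
    ∀ h : Z → ℝ≥0∞, Measurable h → (∀ (g : G) (z : Z), h (g • z) = h z) →
    ∀ hbar fbar : Quotient (MulAction.orbitRel G Z) → ℝ≥0∞,
      (∀ z : Z, hbar (Quotient.mk (MulAction.orbitRel G Z) z) = h z) →
      (∀ z : Z, fbar (Quotient.mk (MulAction.orbitRel G Z) z)
        = ∑' g : G, A.indicator (fun _ => (1 : ℝ≥0∞)) (g • z)) →
      ∫⁻ z in A, h z ∂ν = ∫⁻ q, hbar q * fbar q ∂νG

/-!
`ν_G` is the pushforward along `pr` of `ν|_F` with density `1 / f_F`. For a `G`-invariant `ν` the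
unfolding identity `∫ u · ∑_g v(g·) dν = ∫ (∑_g u(g·)) · v dν` turns `∫ h̄ f̄_A` against it into
`∫_A h dν`, because `∑_g 1_F(gz) / f_F(gz) = 1` whenever the orbit of `z` meets `F`, which holds
`ν`-a.e. Conversely, testing the defining identity with `A = F` and `h = 1_{pr⁻¹ S} / f_F` shows
that every quotient measure gives `S` the mass `∫_F 1_{pr⁻¹ S} / f_F dν`, whence uniqueness. Since
`φ⁻¹ F` is again a fundamental domain and `φ` carries the weighted measure on `φ⁻¹ F` to the one on
`F`, applying this description to both domains shows that `φ_G` preserves `ν_G`.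
-/

open MulAction

namespace OrbitQuotient

variable {G Z : Type*} [Group G] [MulAction G Z]

noncomputable def orbitCount (G : Type*) [Group G] [MulAction G Z] (A : Set Z) (z : Z) : ℝ≥0∞ :=
  ∑' g : G, A.indicator (fun _ => 1) (g • z)

theorem orbitCount_eq_encard (A : Set Z) (z : Z) :
    orbitCount G A z = ({g : G | g • z ∈ A}.encard : ℝ≥0∞) := by
  rw [← ENNReal.tsum_set_one, tsum_subtype _ fun _ => 1]
  rfl

theorem orbitCount_smul (A : Set Z) (g : G) (z : Z) :
    orbitCount G A (g • z) = orbitCount G A z :=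
  (tsum_congr fun k => by simp only [Equiv.coe_mulRight, mul_smul]).trans
    ((Equiv.mulRight g).tsum_eq fun k => A.indicator (fun _ => 1) (k • z))

theorem one_le_orbitCount {A : Set Z} {z : Z} (hz : z ∈ A) : 1 ≤ orbitCount G A z :=
  le_of_eq_of_le (by simp [hz]) <|
    ENNReal.le_tsum (f := fun g : G => A.indicator (fun _ => 1) (g • z)) 1

theorem orbitCount_preimage {φ : Z → Z} (hφ : ∀ (g : G) (z : Z), φ (g • z) = g • φ z)
    (A : Set Z) (z : Z) : orbitCount G (φ ⁻¹' A) z = orbitCount G A (φ z) :=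
  tsum_congr fun g => by rw [← hφ]; rfl

def liftInvariant {α : Type*} (h : Z → α) (hh : ∀ (g : G) (z : Z), h (g • z) = h z) :
    orbitRel.Quotient G Z → α :=
  Quotient.lift h fun _ _ ⟨g, hg⟩ => hg ▸ hh g _

theorem mk_smul (g : G) (z : Z) : Quotient.mk (orbitRel G Z) (g • z) = Quotient.mk _ z :=
  Quotient.sound (mem_orbit z g)

variable [MeasurableSpace Z]

theorem measurable_mk : Measurable (Quotient.mk (orbitRel G Z)) := measurable_quotient_mk''

theorem measurable_orbitCount [Countable G] [MeasurableConstSMul G Z]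
    {A : Set Z} (hA : MeasurableSet A) : Measurable (orbitCount G A) :=
  Measurable.tsum fun g => (measurable_const.indicator hA).comp (measurable_const_smul g)

theorem measurable_of_comp_mk {α : Type*} [MeasurableSpace α] {f : orbitRel.Quotient G Z → α}
    {h : Z → α} (hf : ∀ z, f (Quotient.mk _ z) = h z) (hh : Measurable h) : Measurable f :=
  measurable_from_quotient.2 (by rwa [show f ∘ Quotient.mk'' = h from funext hf])

theorem lintegral_mul_tsum_smul [Countable G] [MeasurableConstSMul G Z] (ν : Measure Z)
    [SMulInvariantMeasure G Z ν] {u v : Z → ℝ≥0∞} (hu : Measurable u) (hv : Measurable v) :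
    ∫⁻ z, u z * ∑' g : G, v (g • z) ∂ν = ∫⁻ z, (∑' g : G, u (g • z)) * v z ∂ν := by
  have hterm (g : G) : Measurable fun z => u z * v (g • z) :=
    hu.mul (hv.comp (measurable_const_smul g))
  have hshift (g : G) : ∫⁻ z, u z * v (g • z) ∂ν = ∫⁻ z, u (g⁻¹ • z) * v z ∂ν := by
    rw [← (measurePreserving_smul g⁻¹ ν).lintegral_comp (hterm g)]
    simp only [smul_inv_smul]
  calc ∫⁻ z, u z * ∑' g : G, v (g • z) ∂ν
      = ∑' g : G, ∫⁻ z, u z * v (g • z) ∂ν := by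
        simp_rw [← ENNReal.tsum_mul_left]
        exact lintegral_tsum fun g => (hterm g).aemeasurable
    _ = ∑' g : G, ∫⁻ z, u (g⁻¹ • z) * v z ∂ν := tsum_congr hshift
    _ = ∫⁻ z, (∑' g : G, u (g⁻¹ • z)) * v z ∂ν := by
        simp_rw [← ENNReal.tsum_mul_right]
        exact (lintegral_tsum fun g =>
          ((hu.comp (measurable_const_smul g⁻¹)).mul hv).aemeasurable).symm
    _ = ∫⁻ z, (∑' g : G, u (g • z)) * v z ∂ν :=
        lintegral_congr fun z => congrArg (· * v z) ((Equiv.inv G).tsum_eq fun g => u (g • z))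

/-- The fundamental domains of the paper: unlike Mathlib's `IsFundamentalDomain`, the translates
of `F` need not be disjoint, each orbit only has to meet `F` finitely often. -/
structure IsFiniteMultiplicityDomain (G : Type*) [Group G] [MulAction G Z] (ν : Measure Z)
    (F : Set Z) : Prop where
  measurableSet : MeasurableSet F
  ae_exists_smul_mem : ∀ᵐ z ∂ν, ∃ g : G, g • z ∈ F
  finite_smul_mem : ∀ z ∈ F, {g : G | g • z ∈ F}.Finite

namespace IsFiniteMultiplicityDomain

variable {ν : Measure Z} {F : Set Z}

theorem orbitCount_ne_top (hF : IsFiniteMultiplicityDomain G ν F) {z : Z}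
    (hz : ∃ g : G, g • z ∈ F) : orbitCount G F z ≠ ⊤ := by
  obtain ⟨g, hg⟩ := hz
  rw [← orbitCount_smul F g, orbitCount_eq_encard]
  exact ENat.toENNReal_ne_top.2 (hF.finite_smul_mem _ hg).encard_lt_top.ne

theorem ae_orbitCount_mul_inv (hF : IsFiniteMultiplicityDomain G ν F) :
    ∀ᵐ z ∂ν, orbitCount G F z * (orbitCount G F z)⁻¹ = 1 := by
  filter_upwards [hF.ae_exists_smul_mem] with z ⟨g, hg⟩
  refine ENNReal.mul_inv_cancel ?_ (hF.orbitCount_ne_top ⟨g, hg⟩)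
  rw [← orbitCount_smul F g]
  exact (zero_lt_one.trans_le (one_le_orbitCount hg)).ne'

theorem preimage (hF : IsFiniteMultiplicityDomain G ν F) {φ : Z → Z}
    (hφ : Measure.QuasiMeasurePreserving φ ν ν) (hφG : ∀ (g : G) (z : Z), φ (g • z) = g • φ z) :
    IsFiniteMultiplicityDomain G ν (φ ⁻¹' F) where
  measurableSet := hφ.measurable hF.measurableSet
  ae_exists_smul_mem := (hφ.ae hF.ae_exists_smul_mem).mono fun z ⟨g, hg⟩ =>
    ⟨g, by rwa [Set.mem_preimage, hφG]⟩
  finite_smul_mem z hz := by simpa only [Set.mem_preimage, hφG] using hF.finite_smul_mem _ hz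

end IsFiniteMultiplicityDomain

noncomputable def domainMeasure (G : Type*) [Group G] [MulAction G Z] (ν : Measure Z) (F : Set Z) :
    Measure Z :=
  (ν.restrict F).withDensity fun z => (orbitCount G F z)⁻¹

section Quotient

variable [Countable G] [MeasurableConstSMul G Z] {ν : Measure Z} {F : Set Z}

theorem lintegral_mul_orbitCount_domainMeasure [SMulInvariantMeasure G Z ν]
    (hF : IsFiniteMultiplicityDomain G ν F) {A : Set Z} (hA : MeasurableSet A) {k : Z → ℝ≥0∞}
    (hk : Measurable k) (hki : ∀ (g : G) (z : Z), k (g • z) = k z) :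
    ∫⁻ z, k z * orbitCount G A z ∂domainMeasure G ν F = ∫⁻ z in A, k z ∂ν := by
  set u := F.indicator fun z => (orbitCount G F z)⁻¹ * k z
  have hu : Measurable u :=
    ((measurable_orbitCount hF.measurableSet).inv.mul hk).indicator hF.measurableSet
  have hsum : ∀ᵐ z ∂ν, ∑' g : G, u (g • z) = k z := by
    filter_upwards [hF.ae_orbitCount_mul_inv] with z hz
    calc ∑' g : G, u (g • z)
        = ∑' g : G, F.indicator (fun _ => 1) (g • z) * ((orbitCount G F z)⁻¹ * k z) :=
          tsum_congr fun g => by by_cases hg : g • z ∈ F <;> simp [u, hg, orbitCount_smul, hki]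
      _ = k z := by rw [ENNReal.tsum_mul_right, ← mul_assoc, ← orbitCount, hz, one_mul]
  calc ∫⁻ z, k z * orbitCount G A z ∂domainMeasure G ν F
      = ∫⁻ z, u z * ∑' g : G, A.indicator (fun _ => 1) (g • z) ∂ν := by
        rw [domainMeasure, lintegral_withDensity_eq_lintegral_mul _
            (f := fun z => (orbitCount G F z)⁻¹) (measurable_orbitCount hF.measurableSet).inv
            (g := fun z => k z * orbitCount G A z) (hk.mul (measurable_orbitCount hA)),
          ← lintegral_indicator hF.measurableSet]
        exact lintegral_congr fun z => by
          by_cases hz : z ∈ F <;> simp [u, hz, mul_assoc, orbitCount]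
    _ = ∫⁻ z, (∑' g : G, u (g • z)) * A.indicator (fun _ => 1) z ∂ν :=
        lintegral_mul_tsum_smul ν hu (measurable_const.indicator hA)
    _ = ∫⁻ z, A.indicator k z ∂ν :=
        lintegral_congr_ae <| hsum.mono fun z hz => by
          by_cases hzA : z ∈ A <;> simp [hz, hzA]
    _ = ∫⁻ z in A, k z ∂ν := lintegral_indicator hA k

theorem isQuotientMeasure_map_domainMeasure [SMulInvariantMeasure G Z ν]
    (hF : IsFiniteMultiplicityDomain G ν F) :
    IsQuotientMeasure ν ((domainMeasure G ν F).map (Quotient.mk (orbitRel G Z))) := by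
  intro A hA h hh hhi hbar fbar hbar_mk fbar_mk
  rw [lintegral_map (f := fun q => hbar q * fbar q) ((measurable_of_comp_mk hbar_mk hh).mul
      (measurable_of_comp_mk fbar_mk (measurable_orbitCount hA))) measurable_mk,
    ← lintegral_mul_orbitCount_domainMeasure hF hA hh hhi]
  simp only [hbar_mk, fbar_mk, orbitCount]

theorem map_domainMeasure_preimage (hF : MeasurableSet F) {φ : Z → Z}
    (hφ : MeasurePreserving φ ν ν) (hφG : ∀ (g : G) (z : Z), φ (g • z) = g • φ z) :
    (domainMeasure G ν (φ ⁻¹' F)).map φ = domainMeasure G ν F := by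
  ext T hT
  rw [Measure.map_apply hφ.measurable hT, domainMeasure, domainMeasure,
    withDensity_apply _ (hφ.measurable hT), withDensity_apply _ hT,
    Measure.restrict_restrict (hφ.measurable hT), Measure.restrict_restrict hT,
    ← Set.preimage_inter]
  simp_rw [orbitCount_preimage hφG]
  exact hφ.setLIntegral_comp_preimage (hT.inter hF) (measurable_orbitCount hF).inv

end Quotient

end OrbitQuotient

open OrbitQuotient

namespace IsQuotientMeasure

variable {G Z : Type*} [Group G] [MulAction G Z] [MeasurableSpace Z] {ν : Measure Z}
  {νG : Measure (orbitRel.Quotient G Z)}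

theorem le_map (hQ : IsQuotientMeasure ν νG) : νG ≤ ν.map (Quotient.mk (orbitRel G Z)) := by
  refine Measure.le_iff.2 fun T hT => ?_
  set B := Quotient.mk (orbitRel G Z) ⁻¹' T
  set fbar := liftInvariant (orbitCount G B) (orbitCount_smul B)
  calc νG T = ∫⁻ q, T.indicator 1 q ∂νG := (lintegral_indicator_one hT).symm
    _ ≤ ∫⁻ q, 1 * fbar q ∂νG := lintegral_mono fun q => by
        induction q using Quotient.inductionOn with
        | h z =>
          by_cases hz : Quotient.mk (orbitRel G Z) z ∈ T
          · rw [Set.indicator_of_mem hz, one_mul]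
            exact one_le_orbitCount (A := B) hz
          · rw [Set.indicator_of_notMem hz]
            exact zero_le
    _ = ∫⁻ _ in B, 1 ∂ν := (hQ B hT 1 measurable_const (fun _ _ => rfl) 1 fbar
        (fun _ => rfl) fun _ => rfl).symm
    _ = ν.map (Quotient.mk (orbitRel G Z)) T := by
        rw [setLIntegral_one, Measure.map_apply measurable_mk hT]

variable [Countable G] [MeasurableConstSMul G Z] {F : Set Z}

theorem ae_lift_orbitCount_mul_inv (hQ : IsQuotientMeasure ν νG)
    (hF : IsFiniteMultiplicityDomain G ν F) :
    ∀ᵐ q ∂νG, liftInvariant (orbitCount G F) (orbitCount_smul F) q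
      * (liftInvariant (orbitCount G F) (orbitCount_smul F) q)⁻¹ = 1 := by
  have hfbar : Measurable (liftInvariant (orbitCount G F) (orbitCount_smul F)) :=
    measurable_of_comp_mk (fun _ => rfl) (measurable_orbitCount hF.measurableSet)
  refine ae_mono hQ.le_map ((ae_map_iff measurable_mk.aemeasurable ?_).2 ?_)
  · exact measurableSet_eq_fun (hfbar.mul hfbar.inv) measurable_const
  · exact hF.ae_orbitCount_mul_inv

theorem eq_map_domainMeasure (hQ : IsQuotientMeasure ν νG)
    (hF : IsFiniteMultiplicityDomain G ν F) :
    νG = (domainMeasure G ν F).map (Quotient.mk (orbitRel G Z)) := by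
  ext S hS
  set B := Quotient.mk (orbitRel G Z) ⁻¹' S
  set h := B.indicator fun z => (orbitCount G F z)⁻¹
  have hhi (g : G) (z : Z) : h (g • z) = h z := by
    have hgB : g • z ∈ B ↔ z ∈ B := by simp only [B, Set.mem_preimage, mk_smul]
    by_cases hz : z ∈ B <;> simp [h, hz, hgB, orbitCount_smul]
  have hmh : Measurable h := (measurable_orbitCount hF.measurableSet).inv.indicator hS
  set hbar := liftInvariant h hhi
  set fbar := liftInvariant (orbitCount G F) (orbitCount_smul F)
  have hF_integral := hQ F hF.measurableSet h hmh hhi hbar fbar (fun _ => rfl) fun _ => rfl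
  calc νG S = ∫⁻ q, S.indicator 1 q ∂νG := (lintegral_indicator_one hS).symm
    _ = ∫⁻ q, hbar q * fbar q ∂νG := by
        refine lintegral_congr_ae <| (hQ.ae_lift_orbitCount_mul_inv hF).mono fun q hq => ?_
        induction q using Quotient.inductionOn with
        | h z =>
          show S.indicator 1 (Quotient.mk _ z)
            = B.indicator (fun z => (orbitCount G F z)⁻¹) z * orbitCount G F z
          by_cases hz : Quotient.mk (orbitRel G Z) z ∈ S
          · rw [Set.indicator_of_mem hz, Set.indicator_of_mem (show z ∈ B from hz), mul_comm]
            exact hq.symm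
          · rw [Set.indicator_of_notMem hz, Set.indicator_of_notMem (show z ∉ B from hz),
              zero_mul]
    _ = ∫⁻ z in F, h z ∂ν := hF_integral.symm
    _ = domainMeasure G ν F B := by
        rw [domainMeasure, withDensity_apply _ (measurable_mk hS),
          ← lintegral_indicator (measurable_mk hS)]
    _ = (domainMeasure G ν F).map (Quotient.mk (orbitRel G Z)) S :=
        (Measure.map_apply measurable_mk hS).symm

theorem measurePreserving_factor (hQ : IsQuotientMeasure ν νG)
    (hF : IsFiniteMultiplicityDomain G ν F) {φ : Z → Z} (hφ : MeasurePreserving φ ν ν)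
    (hφG : ∀ (g : G) (z : Z), φ (g • z) = g • φ z)
    {φG : orbitRel.Quotient G Z → orbitRel.Quotient G Z}
    (hφG_mk : ∀ z, φG (Quotient.mk _ z) = Quotient.mk _ (φ z)) :
    MeasurePreserving φG νG νG := by
  have hφG_comp : φG ∘ Quotient.mk _ = Quotient.mk _ ∘ φ := funext hφG_mk
  have hφGm : Measurable φG := measurable_of_comp_mk hφG_mk (measurable_mk.comp hφ.measurable)
  refine ⟨hφGm, ?_⟩
  calc νG.map φG
      = ((domainMeasure G ν (φ ⁻¹' F)).map (Quotient.mk _)).map φG := by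
        rw [← hQ.eq_map_domainMeasure (hF.preimage hφ.quasiMeasurePreserving hφG)]
    _ = ((domainMeasure G ν (φ ⁻¹' F)).map φ).map (Quotient.mk _) := by
        rw [Measure.map_map hφGm measurable_mk, Measure.map_map measurable_mk hφ.measurable,
          hφG_comp]
    _ = νG := by
        rw [map_domainMeasure_preimage hF.measurableSet hφ hφG, ← hQ.eq_map_domainMeasure hF]

end IsQuotientMeasure

theorem stmt15 {G Z : Type*} [Group G] [Countable G] [MulAction G Z] [mZ : MeasurableSpace Z]
    (hmeas : ∀ g : G, Measurable fun z : Z => g • z)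
    (ν : Measure Z)
    (hinv : ∀ (g : G) (A : Set Z), MeasurableSet A → ν ((fun z : Z => g • z) ⁻¹' A) = ν A)
    (F : Set Z) (hFm : MeasurableSet F)
    (hFfull : ν ((⋃ g : G, (fun z : Z => g • z) '' F)ᶜ) = 0)
    (hFfin : ∀ z ∈ F, {g : G | g • z ∈ F}.Finite) :
    (∃! νG : @Measure (Quotient (MulAction.orbitRel G Z))
        (MeasurableSpace.map (Quotient.mk (MulAction.orbitRel G Z)) mZ),
      IsQuotientMeasure ν νG) ∧
    (∀ νG : @Measure (Quotient (MulAction.orbitRel G Z))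
        (MeasurableSpace.map (Quotient.mk (MulAction.orbitRel G Z)) mZ),
      IsQuotientMeasure ν νG →
      ∀ φ : Z → Z, Measurable φ →
        (∀ A : Set Z, MeasurableSet A → ν (φ ⁻¹' A) = ν A) →
        (∀ (g : G) (z : Z), φ (g • z) = g • φ z) →
        ∀ φG : Quotient (MulAction.orbitRel G Z) → Quotient (MulAction.orbitRel G Z),
          (∀ z : Z, φG (Quotient.mk (MulAction.orbitRel G Z) z)
            = Quotient.mk (MulAction.orbitRel G Z) (φ z)) →
          ∀ S : Set (Quotient (MulAction.orbitRel G Z)),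
            MeasurableSet[MeasurableSpace.map (Quotient.mk (MulAction.orbitRel G Z)) mZ] S →
            νG (φG ⁻¹' S) = νG S) := by
  have : MeasurableConstSMul G Z := ⟨hmeas⟩
  have : SMulInvariantMeasure G Z ν := ⟨hinv⟩
  have hcover : ∀ᵐ z ∂ν, ∃ g : G, g • z ∈ F := by
    refine ae_iff.2 (measure_mono_null ?_ hFfull)
    rintro _ hz hmem
    obtain ⟨g, x, hx, rfl⟩ := Set.mem_iUnion.1 hmem
    exact hz ⟨g⁻¹, by rwa [inv_smul_smul]⟩
  have hF : IsFiniteMultiplicityDomain G ν F := ⟨hFm, hcover, hFfin⟩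
  refine ⟨⟨_, isQuotientMeasure_map_domainMeasure hF, fun νG hQ => hQ.eq_map_domainMeasure hF⟩,
    fun νG hQ φ hφm hφν hφG φG hφG_mk S hS => ?_⟩
  have hφ : MeasurePreserving φ ν ν :=
    ⟨hφm, Measure.ext fun A hA => by rw [Measure.map_apply hφm hA, hφν A hA]⟩
  exact (hQ.measurePreserving_factor hF hφ hφG hφG_mk).measure_preimage hS.nullMeasurableSet
end

section
/- Let G be a countable group acting by measurable maps on a measurable space (Z, 𝔐), ν a G-invariant measure on Z admitting a fundamental domain, and ν_G the quotient measure on (Z/G, 𝔐/G) characterized by ∫_A h dν = ∫_{Z/G} h̄·f̄_A dν_G for all measurable A ⊆ Z and all G-invariant measurable h : Z → [0,∞]. Then for every measurable set A ⊆ Z, the following are equivalent: ν_G(pr(A)) = 0; ν(A) = 0; ν(G·A) = 0. -/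
/-!
Apply the defining identity of `ν_G` with `h = 1` to the saturation `G·A`: being `G`-invariant,
its counting function is `#G · 1_{pr A}` on the quotient, so `ν(G·A) = #G · ν_G(pr A)` with
`#G ≥ 1` (possibly `∞`). On the other hand `G·A` is a countable union of translates of `A`,
each of measure `ν(A)`, so `ν(A) = 0 ↔ ν(G·A) = 0`.
-/

open MeasureTheory
open scoped ENNReal

section
variable {G Z : Type*} [Group G] [MulAction G Z]

lemma image_smul_eq_preimage_inv_smul (g : G) (A : Set Z) :
    (fun z : Z => g • z) '' A = (fun z : Z => g⁻¹ • z) ⁻¹' A :=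
  (Set.preimage_smul_inv g A).symm

lemma preimage_mk_image_mk (A : Set Z) :
    Quotient.mk (MulAction.orbitRel G Z) ⁻¹' (Quotient.mk (MulAction.orbitRel G Z) '' A) =
      ⋃ g : G, (fun z : Z => g • z) '' A :=
  MulAction.quotient_preimage_image_eq_union_mul A

lemma tsum_indicator_iUnion_image_smul (A : Set Z) (z : Z) :
    ∑' g : G, (⋃ g : G, (fun z : Z => g • z) '' A).indicator (fun _ => (1 : ℝ≥0∞)) (g • z) =
      (Quotient.mk (MulAction.orbitRel G Z) '' A).indicator (fun _ => (ENat.card G : ℝ≥0∞))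
        (Quotient.mk (MulAction.orbitRel G Z) z) := by
  have hmk : ∀ g : G, Quotient.mk (MulAction.orbitRel G Z) (g • z) = Quotient.mk _ z :=
    fun g => Quotient.sound (MulAction.mem_orbit z g)
  have hterm : ∀ g : G, (Quotient.mk (MulAction.orbitRel G Z) ⁻¹'
      (Quotient.mk (MulAction.orbitRel G Z) '' A)).indicator (fun _ => (1 : ℝ≥0∞)) (g • z) =
      (Quotient.mk (MulAction.orbitRel G Z) '' A).indicator (fun _ => 1) (Quotient.mk _ z) :=
    fun g => (Set.indicator_comp_right (g := fun _ => (1 : ℝ≥0∞)) (Quotient.mk _)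
      (x := g • z)).trans (congrArg _ (hmk g))
  rw [← preimage_mk_image_mk, tsum_congr hterm, ENNReal.tsum_const]
  by_cases hz : Quotient.mk (MulAction.orbitRel G Z) z ∈ Quotient.mk _ '' A <;> simp [hz]

variable [mZ : MeasurableSpace Z]

lemma measurableSet_iUnion_image_smul [Countable G]
    (hmeas : ∀ g : G, Measurable fun z : Z => g • z) {A : Set Z} (hA : MeasurableSet A) :
    MeasurableSet (⋃ g : G, (fun z : Z => g • z) '' A) :=
  .iUnion fun g => image_smul_eq_preimage_inv_smul g A ▸ hmeas g⁻¹ hA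

lemma measurableSet_image_mk [Countable G] (hmeas : ∀ g : G, Measurable fun z : Z => g • z)
    {A : Set Z} (hA : MeasurableSet A) :
    MeasurableSet[MeasurableSpace.map (Quotient.mk (MulAction.orbitRel G Z)) mZ]
      (Quotient.mk (MulAction.orbitRel G Z) '' A) := by
  show MeasurableSet (Quotient.mk _ ⁻¹' _)
  exact preimage_mk_image_mk (G := G) A ▸ measurableSet_iUnion_image_smul hmeas hA

lemma measure_iUnion_image_smul_eq_zero_iff [Countable G] {ν : Measure Z}
    (hinv : ∀ (g : G) (A : Set Z), MeasurableSet A → ν ((fun z : Z => g • z) ⁻¹' A) = ν A)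
    {A : Set Z} (hA : MeasurableSet A) :
    ν (⋃ g : G, (fun z : Z => g • z) '' A) = 0 ↔ ν A = 0 := by
  refine ⟨fun h => measure_mono_null ?_ h, fun h => measure_iUnion_null fun g => ?_⟩
  · exact fun z hz => Set.mem_iUnion.2 ⟨1, z, hz, one_smul G z⟩
  · rw [image_smul_eq_preimage_inv_smul, hinv g⁻¹ A hA, h]

lemma IsQuotientMeasure.measure_iUnion_image_smul [Countable G] {ν : Measure Z}
    {νG : @Measure (Quotient (MulAction.orbitRel G Z))
      (MeasurableSpace.map (Quotient.mk (MulAction.orbitRel G Z)) mZ)}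
    (hνG : IsQuotientMeasure ν νG) (hmeas : ∀ g : G, Measurable fun z : Z => g • z)
    {A : Set Z} (hA : MeasurableSet A) :
    ν (⋃ g : G, (fun z : Z => g • z) '' A) =
      ENat.card G * νG (Quotient.mk (MulAction.orbitRel G Z) '' A) := by
  have h := hνG _ (measurableSet_iUnion_image_smul hmeas hA) (fun _ => 1) measurable_const
    (fun _ _ => rfl) (fun _ => 1) _ (fun _ => rfl)
    fun z => (tsum_indicator_iUnion_image_smul A z).symm
  rw [← setLIntegral_one, h]
  simp only [one_mul]
  exact lintegral_indicator_const (measurableSet_image_mk hmeas hA) _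

end

theorem stmt17_general {G Z : Type*} [Group G] [Countable G] [MulAction G Z] [mZ : MeasurableSpace Z]
    (hmeas : ∀ g : G, Measurable fun z : Z => g • z)
    (ν : Measure Z)
    (hinv : ∀ (g : G) (A : Set Z), MeasurableSet A → ν ((fun z : Z => g • z) ⁻¹' A) = ν A)
    (νG : @Measure (Quotient (MulAction.orbitRel G Z))
      (MeasurableSpace.map (Quotient.mk (MulAction.orbitRel G Z)) mZ))
    (hνG : IsQuotientMeasure ν νG) :
    ∀ A : Set Z, MeasurableSet A →
      ((νG (Quotient.mk (MulAction.orbitRel G Z) '' A) = 0 ↔ ν A = 0) ∧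
        (ν A = 0 ↔ ν (⋃ g : G, (fun z : Z => g • z) '' A) = 0)) := by
  intro A hA
  have hsat := measure_iUnion_image_smul_eq_zero_iff hinv hA
  have hcard : (ENat.card G : ℝ≥0∞) ≠ 0 := by simp
  refine ⟨?_, hsat.symm⟩
  rw [← hsat, hνG.measure_iUnion_image_smul hmeas hA, mul_eq_zero, or_iff_right hcard]

theorem stmt17 {G Z : Type*} [Group G] [Countable G] [MulAction G Z] [mZ : MeasurableSpace Z]
    (hmeas : ∀ g : G, Measurable fun z : Z => g • z)
    (ν : Measure Z)
    (hinv : ∀ (g : G) (A : Set Z), MeasurableSet A → ν ((fun z : Z => g • z) ⁻¹' A) = ν A)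
    (F : Set Z) (hFm : MeasurableSet F)
    (hFfull : ν ((⋃ g : G, (fun z : Z => g • z) '' F)ᶜ) = 0)
    (hFfin : ∀ z ∈ F, {g : G | g • z ∈ F}.Finite)
    (νG : @Measure (Quotient (MulAction.orbitRel G Z))
      (MeasurableSpace.map (Quotient.mk (MulAction.orbitRel G Z)) mZ))
    (hνG : IsQuotientMeasure ν νG) :
    ∀ A : Set Z, MeasurableSet A →
      ((νG (Quotient.mk (MulAction.orbitRel G Z) '' A) = 0 ↔ ν A = 0) ∧
        (ν A = 0 ↔ ν (⋃ g : G, (fun z : Z => g • z) '' A) = 0)) :=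
  stmt17_general (mZ := mZ) hmeas ν hinv νG hνG
end

section
/- Let Ω be a topological space equipped with a continuous action of ℝ, written (t,w) ↦ t·w, and let ψ : Ω → ℝ be a Borel measurable function such that for every w ∈ Ω the map t ↦ ψ(t·w) is continuous. Then the map ψ_* : Ω → C(ℝ,ℝ) defined by (ψ_*(w))(t) = ψ(t·w) is Borel measurable, where C(ℝ,ℝ) denotes the continuous functions ℝ → ℝ with the compact-open topology (the topology of uniform convergence on compact subsets). -/
open scoped Topology

open Set

theorem stmt18 {Ω : Type*} [TopologicalSpace Ω] [MeasurableSpace Ω] [BorelSpace Ω]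
    [AddAction ℝ Ω] [ContinuousVAdd ℝ Ω]
    (ψ : Ω → ℝ) (hψ : Measurable ψ)
    (hcont : ∀ w : Ω, Continuous fun t : ℝ => ψ (t +ᵥ w)) :
    @Measurable Ω C(ℝ, ℝ) _ (borel C(ℝ, ℝ))
      (fun w : Ω => (⟨fun t : ℝ => ψ (t +ᵥ w), hcont w⟩ : C(ℝ, ℝ))) := by
  letI : MeasurableSpace C(ℝ, ℝ) := borel C(ℝ, ℝ)
  set Φ : Ω → C(ℝ, ℝ) := fun w => ⟨fun t => ψ (t +ᵥ w), hcont w⟩ with hΦ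
  show Measurable Φ
  obtain ⟨F, hFc, hFd⟩ := TopologicalSpace.exists_countable_dense C(ℝ, ℝ)
  have hmeas : ∀ t : ℝ, Measurable fun w => ψ (t +ᵥ w) :=
    fun t => hψ.comp (continuous_const_vadd t).measurable
  set A : C(ℝ, ℝ) → ℕ → ℝ → Set Ω := fun f n q =>
    ⋂ (t : ℚ) (_ : (t : ℝ) ∈ Icc (-(n : ℝ)) n),
      {w | dist (ψ ((t : ℝ) +ᵥ w)) (f t) ≤ q} with hA
  have hA_meas : ∀ f n q, MeasurableSet (A f n q) := by
    intro f n q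
    refine MeasurableSet.iInter fun t => MeasurableSet.iInter fun _ => ?_
    exact measurableSet_le ((hmeas t).dist measurable_const) measurable_const
  have hA_key : ∀ f n q w, w ∈ A f n q →
      ∀ t ∈ Icc (-(n : ℝ)) (n : ℝ), dist (Φ w t) (f t) ≤ q := by
    intro f n q w hw t ht
    have hwq : ∀ s : ℚ, (s : ℝ) ∈ Icc (-(n : ℝ)) n → dist (Φ w (s : ℝ)) (f s) ≤ q := by
      intro s hs
      have := hw
      rw [hA] at this
      simp only [mem_iInter] at this
      exact this s hs
    have hS : IsClosed {u : ℝ | dist (Φ w u) (f u) ≤ q} :=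
      isClosed_le (((Φ w).continuous.dist f.continuous)) continuous_const
    rcases Nat.eq_zero_or_pos n with hn | hn
    · subst hn
      simp only [Nat.cast_zero, neg_zero, Icc_self, mem_singleton_iff] at ht
      subst ht
      have := hwq 0 (by simp)
      simpa using this
    · have hlt : -(n : ℝ) < n := by
        have : (0 : ℝ) < n := by exact_mod_cast hn
        linarith
      have hIoo : Ioo (-(n : ℝ)) n ⊆ {u : ℝ | dist (Φ w u) (f u) ≤ q} := by
        have hdense : Dense (Set.range ((↑) : ℚ → ℝ)) := Rat.denseRange_cast
        have h1 : Ioo (-(n : ℝ)) n ⊆ closure (Ioo (-(n : ℝ)) n ∩ Set.range ((↑) : ℚ → ℝ)) :=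
          hdense.open_subset_closure_inter isOpen_Ioo
        refine fun u hu => ?_
        have h2 : Ioo (-(n : ℝ)) n ∩ Set.range ((↑) : ℚ → ℝ) ⊆
            {u : ℝ | dist (Φ w u) (f u) ≤ q} := by
          rintro _ ⟨hmem, s, rfl⟩
          exact hwq s (Ioo_subset_Icc_self hmem)
        have := h1 hu
        exact (hS.closure_subset_iff.mpr h2) this
      have : Icc (-(n : ℝ)) n ⊆ {u : ℝ | dist (Φ w u) (f u) ≤ q} := by
        rw [← closure_Ioo hlt.ne]
        exact hS.closure_subset_iff.mpr hIoo
      exact this ht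
  have basisU := ContinuousMap.hasBasis_compactConvergenceUniformity (α := ℝ) (β := ℝ)
  refine measurable_generateFrom fun U hU => ?_
  have hU' : IsOpen U := hU
  have key : Φ ⁻¹' U = ⋃ (f ∈ F) (n : ℕ) (q : ℚ)
      (_ : 0 < q ∧ ∀ h : C(ℝ, ℝ),
        (∀ t ∈ Icc (-(n : ℝ)) (n : ℝ), dist (h t) (f t) ≤ 2 * (q : ℝ)) → h ∈ U),
      A f n (q : ℝ) := by
    ext w
    simp only [mem_preimage, mem_iUnion]
    constructor
    · intro hw
      have basis := nhds_basis_uniformity' (x := Φ w) basisU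
      obtain ⟨⟨K, V⟩, ⟨hK, hV⟩, hsub⟩ := basis.mem_iff.mp (hU'.mem_nhds hw)
      obtain ⟨ε, hε, hball⟩ := Metric.mem_uniformity_dist.mp hV
      obtain ⟨n, hn⟩ : ∃ n : ℕ, K ⊆ Icc (-(n : ℝ)) n := by
        obtain ⟨r, hr⟩ := hK.isBounded.subset_closedBall 0
        obtain ⟨n, hrn⟩ := exists_nat_ge r
        refine ⟨n, hr.trans ?_⟩
        rw [Real.closedBall_eq_Icc]
        intro x hx
        simp only [mem_Icc] at hx ⊢
        constructor <;> linarith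
      obtain ⟨q, hq0, hq⟩ := exists_rat_btwn (show (0 : ℝ) < ε / 3 by linarith)
      have hq0' : (0 : ℚ) < q := by exact_mod_cast hq0
      have hnbhd : {h : C(ℝ, ℝ) | ∀ x ∈ Icc (-(n : ℝ)) (n : ℝ),
          (Φ w x, h x) ∈ {p : ℝ × ℝ | dist p.1 p.2 < (q : ℝ)}} ∈ 𝓝 (Φ w) := by
        exact basis.mem_of_mem (i := (Icc (-(n : ℝ)) n, {p : ℝ × ℝ | dist p.1 p.2 < (q : ℝ)}))
          ⟨isCompact_Icc, Metric.dist_mem_uniformity (by exact_mod_cast hq0)⟩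
      obtain ⟨f, hfnb, hfF⟩ := mem_closure_iff_nhds.mp (hFd (Φ w)) _ hnbhd
      simp only [mem_setOf_eq] at hfnb
      refine ⟨f, hfF, n, q, ⟨hq0', fun h hh => ?_⟩, ?_⟩
      · apply hsub
        intro x hx
        apply hball
        have h1 := hfnb x (hn hx)
        have h2 := hh x (hn hx)
        calc dist (Φ w x) (h x) ≤ dist (Φ w x) (f x) + dist (f x) (h x) := dist_triangle _ _ _
          _ < (q : ℝ) + 2 * (q : ℝ) := by
              rw [dist_comm (f x) (h x)]; linarith
          _ < ε := by linarith
      · rw [hA]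
        simp only [mem_iInter]
        intro t ht
        exact le_of_lt (hfnb (t : ℝ) ht)
    · rintro ⟨f, hfF, n, q, ⟨hq0, hcond⟩, hw⟩
      apply hcond (Φ w)
      intro t ht
      have := hA_key f n (q : ℝ) w hw t ht
      have hq0' : (0 : ℝ) < q := by exact_mod_cast hq0
      linarith
  rw [key]
  exact MeasurableSet.biUnion hFc fun f _ => MeasurableSet.iUnion fun n => MeasurableSet.iUnion fun q =>
    MeasurableSet.iUnion fun _ => hA_meas f n (q : ℝ)
end

section
/- Let Ω be a topological space equipped with a continuous action of ℝ, written (t,w) ↦ t·w, and let ψ : Ω → ℝ be Borel measurable such that for every w ∈ Ω the map t ↦ ψ(t·w) is continuous. For w ∈ Ω let Per(w) = {a ∈ ℝ : ψ((t+a)·w) = ψ(t·w) for all t ∈ ℝ}, which is a closed subgroup of ℝ. Then the map sending w to the closed subgroup of ℝ generated by Per(w) is Borel measurable; equivalently, the map Ω → [0,∞] sending w to inf{a ∈ ℝ : a > 0 and a ∈ Per(w)} (with inf ∅ = ∞) is Borel measurable. -/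
open scoped ENNReal Topology

open Filter in
private lemma stmt19_key {Ω : Type*} [TopologicalSpace Ω] [MeasurableSpace Ω] [BorelSpace Ω]
    [AddAction ℝ Ω] [ContinuousVAdd ℝ Ω]
    (ψ : Ω → ℝ) (hψ : Measurable ψ)
    (hcont : ∀ w : Ω, Continuous fun t : ℝ => ψ (t +ᵥ w))
    (q : ℕ → ℚ) (hq : Function.Surjective q) (α b : ℚ) :
    MeasurableSet {w : Ω | ∃ a ∈ Set.Icc (α : ℝ) (b : ℝ),
      ∀ t : ℝ, ψ ((t + a) +ᵥ w) = ψ (t +ᵥ w)} := by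
  have hmeas : ∀ c : ℝ, Measurable fun w : Ω => ψ (c +ᵥ w) :=
    fun c => hψ.comp (continuous_const_vadd c).measurable
  have hset : {w : Ω | ∃ a ∈ Set.Icc (α : ℝ) (b : ℝ), ∀ t : ℝ, ψ ((t + a) +ᵥ w) = ψ (t +ᵥ w)}
      = ⋂ n : ℕ, ⋃ r : ℚ, ⋃ (_ : (r : ℝ) ∈ Set.Icc (α : ℝ) (b : ℝ)),
        {w : Ω | ∀ i ≤ n, |ψ (((q i : ℝ) + (r : ℝ)) +ᵥ w) - ψ ((q i : ℝ) +ᵥ w)|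
          ≤ 1 / ((n : ℝ) + 1)} := by
    ext w
    simp only [Set.mem_setOf_eq, Set.mem_iInter, Set.mem_iUnion]
    constructor
    · rintro ⟨a, ha, hper⟩ n
      set U : Set ℝ := ⋂ i ∈ Finset.range (n + 1),
          (fun s : ℝ => ψ (((q i : ℝ) + s) +ᵥ w)) ⁻¹'
            Metric.ball (ψ ((q i : ℝ) +ᵥ w)) (1 / ((n : ℝ) + 1)) with hUdef
      have hUopen : IsOpen U := isOpen_biInter_finset fun i _ =>
        (Metric.isOpen_ball).preimage ((hcont w).comp (continuous_const.add continuous_id))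
      have haU : a ∈ U := by
        refine Set.mem_iInter₂.2 fun i _ => ?_
        simp only [Set.mem_preimage, Metric.mem_ball, hper (q i : ℝ), dist_self]
        positivity
      have hrat : ∃ r : ℚ, (r : ℝ) ∈ U ∩ Set.Icc (α : ℝ) (b : ℝ) := by
        rcases eq_or_lt_of_le ha.1 with h1 | h1
        · exact ⟨α, by rw [h1]; exact haU, le_refl _, by rw [h1]; exact ha.2⟩
        · rcases eq_or_lt_of_le ha.2 with h2 | h2
          · exact ⟨b, by rw [← h2]; exact haU, by rw [← h2]; exact ha.1, le_refl _⟩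
          · obtain ⟨r, hr⟩ := (Rat.denseRange_cast (𝕜 := ℝ)).exists_mem_open
              (hUopen.inter isOpen_Ioo) ⟨a, haU, h1, h2⟩
            exact ⟨r, hr.1, hr.2.1.le, hr.2.2.le⟩
      obtain ⟨r, hrU, hrI⟩ := hrat
      refine ⟨r, hrI, fun i hi => ?_⟩
      have := Set.mem_iInter₂.1 hrU i (Finset.mem_range.2 (Nat.lt_succ_of_le hi))
      simp only [Set.mem_preimage, Metric.mem_ball, Real.dist_eq] at this
      exact this.le
    · intro h
      choose r hrI hrb using h
      obtain ⟨a, haI, φ, hφ, hlim⟩ :=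
        (isCompact_Icc (a := (α : ℝ)) (b := (b : ℝ))).tendsto_subseq
          (x := fun n => (r n : ℝ)) hrI
      have hqper : ∀ j : ℕ, ψ (((q j : ℝ) + a) +ᵥ w) = ψ ((q j : ℝ) +ᵥ w) := by
        intro j
        have cont1 : Continuous fun s : ℝ =>
            |ψ (((q j : ℝ) + s) +ᵥ w) - ψ ((q j : ℝ) +ᵥ w)| :=
          (((hcont w).comp (continuous_const.add continuous_id)).sub continuous_const).abs
        have t1 : Tendsto (fun k => |ψ (((q j : ℝ) + (r (φ k) : ℝ)) +ᵥ w)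
            - ψ ((q j : ℝ) +ᵥ w)|) atTop
            (𝓝 (|ψ (((q j : ℝ) + a) +ᵥ w) - ψ ((q j : ℝ) +ᵥ w)|)) :=
          (cont1.tendsto a).comp hlim
        have t2 : Tendsto (fun k => 1 / ((φ k : ℝ) + 1)) atTop (𝓝 0) :=
          tendsto_one_div_add_atTop_nhds_zero_nat.comp hφ.tendsto_atTop
        have hle : ∀ᶠ k in atTop, |ψ (((q j : ℝ) + (r (φ k) : ℝ)) +ᵥ w)
            - ψ ((q j : ℝ) +ᵥ w)| ≤ 1 / ((φ k : ℝ) + 1) := by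
          filter_upwards [eventually_ge_atTop j] with k hk
          exact hrb (φ k) j (hk.trans (hφ.le_apply))
        have h0 : |ψ (((q j : ℝ) + a) +ᵥ w) - ψ ((q j : ℝ) +ᵥ w)| ≤ 0 :=
          le_of_tendsto_of_tendsto t1 t2 hle
        have := le_antisymm h0 (abs_nonneg _)
        rw [abs_eq_zero, sub_eq_zero] at this
        exact this
      have heq : (fun t : ℝ => ψ ((t + a) +ᵥ w)) = fun t : ℝ => ψ (t +ᵥ w) := by
        refine Continuous.ext_on (Rat.denseRange_cast (𝕜 := ℝ))
          ((hcont w).comp (continuous_id.add continuous_const)) (hcont w) ?_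
        rintro _ ⟨p, rfl⟩
        obtain ⟨j, rfl⟩ := hq p
        exact hqper j
      exact ⟨a, haI, fun t => congrFun heq t⟩
  rw [hset]
  refine MeasurableSet.iInter fun n => MeasurableSet.iUnion fun r =>
    MeasurableSet.iUnion fun _ => ?_
  have : {w : Ω | ∀ i ≤ n, |ψ (((q i : ℝ) + (r : ℝ)) +ᵥ w) - ψ ((q i : ℝ) +ᵥ w)|
      ≤ 1 / ((n : ℝ) + 1)}
      = ⋂ i : ℕ, ⋂ (_ : i ≤ n), {w : Ω | |ψ (((q i : ℝ) + (r : ℝ)) +ᵥ w)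
        - ψ ((q i : ℝ) +ᵥ w)| ≤ 1 / ((n : ℝ) + 1)} := by
    ext w; simp
  rw [this]
  exact MeasurableSet.iInter fun i => MeasurableSet.iInter fun _ =>
    measurableSet_le (((hmeas _).sub (hmeas _)).abs) measurable_const

theorem stmt19 {Ω : Type*} [TopologicalSpace Ω] [MeasurableSpace Ω] [BorelSpace Ω]
    [AddAction ℝ Ω] [ContinuousVAdd ℝ Ω]
    (ψ : Ω → ℝ) (hψ : Measurable ψ)
    (hcont : ∀ w : Ω, Continuous fun t : ℝ => ψ (t +ᵥ w)) :
    Measurable (fun w : Ω =>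
      sInf {x : ℝ≥0∞ | ∃ a : ℝ, 0 < a ∧
        (∀ t : ℝ, ψ ((t + a) +ᵥ w) = ψ (t +ᵥ w)) ∧ x = ENNReal.ofReal a}) := by
  obtain ⟨q, hq⟩ := exists_surjective_nat ℚ
  set f : Ω → ℝ≥0∞ := fun w : Ω =>
    sInf {x : ℝ≥0∞ | ∃ a : ℝ, 0 < a ∧
      (∀ t : ℝ, ψ ((t + a) +ᵥ w) = ψ (t +ᵥ w)) ∧ x = ENNReal.ofReal a} with hf
  apply measurable_of_Ioi
  intro c
  have hpre : f ⁻¹' Set.Ioi c = {w : Ω | f w ≤ c}ᶜ := by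
    ext w
    simp [not_le]
  rw [hpre]
  apply MeasurableSet.compl
  have hchar : {w : Ω | f w ≤ c}
      = ⋂ (b : ℚ), ⋂ (_ : c < ENNReal.ofReal (b : ℝ)),
        ⋃ (α : ℚ), ⋃ (_ : 0 < α ∧ (α : ℝ) ≤ (b : ℝ)),
          {w : Ω | ∃ a ∈ Set.Icc (α : ℝ) (b : ℝ),
            ∀ t : ℝ, ψ ((t + a) +ᵥ w) = ψ (t +ᵥ w)} := by
    ext w
    simp only [Set.mem_setOf_eq, Set.mem_iInter, Set.mem_iUnion]
    constructor
    · intro hw b hb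
      have hlt : f w < ENNReal.ofReal (b : ℝ) := lt_of_le_of_lt hw hb
      obtain ⟨x, hxS, hxlt⟩ := sInf_lt_iff.1 hlt
      obtain ⟨a, ha0, hper, rfl⟩ := hxS
      have hab : a < (b : ℝ) :=
        (ENNReal.ofReal_lt_ofReal_iff_of_nonneg ha0.le).1 hxlt
      obtain ⟨α, hα0, hαa⟩ := exists_rat_btwn ha0
      refine ⟨α, ⟨by exact_mod_cast hα0, (hαa.trans hab).le⟩,
        a, ⟨hαa.le, hab.le⟩, hper⟩
    · intro hw
      refine le_of_forall_gt_imp_ge_of_dense fun d hd => ?_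
      obtain ⟨rb, hrb0, h1, h2⟩ := ENNReal.lt_iff_exists_rat_btwn.1 hd
      have h1' : c < ENNReal.ofReal (rb : ℝ) := h1
      obtain ⟨α, ⟨hα0, hαb⟩, a, ⟨ha1, ha2⟩, hper⟩ := hw rb h1'
      have hmem : ENNReal.ofReal a ∈ {x : ℝ≥0∞ | ∃ a' : ℝ, 0 < a' ∧
          (∀ t : ℝ, ψ ((t + a') +ᵥ w) = ψ (t +ᵥ w)) ∧ x = ENNReal.ofReal a'} :=
        ⟨a, lt_of_lt_of_le (by exact_mod_cast hα0) ha1, hper, rfl⟩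
      calc f w ≤ ENNReal.ofReal a := sInf_le hmem
        _ ≤ ENNReal.ofReal (rb : ℝ) := ENNReal.ofReal_le_ofReal ha2
        _ ≤ d := h2.le
  rw [hchar]
  exact MeasurableSet.iInter fun b => MeasurableSet.iInter fun _ =>
    MeasurableSet.iUnion fun α => MeasurableSet.iUnion fun _ =>
      stmt19_key ψ hψ hcont q hq α b
end
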